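/- arXiv:2410.15336 — 2 statements merged into one kernel-verified Lean document; each statement's English description precedes it below -/
import Mathlib

section
/- For a₁ ∈ ℝᵈ and R > 0, ∫_{‖x−a₁‖ > R} (2π)^{−d/2} exp(−‖x − a₁‖²/2) · (‖x − a₁‖²/2) dx ≤ d · exp((d/2)·log 2 − R²/4). -/
/-!
On the tail `‖y‖ > R` we split `exp (-‖y‖² / 2) = exp (-‖y‖² / 4) * exp (-‖y‖² / 4)` and bound
one factor by `exp (-R² / 4)`. What is left is integrated over the whole space: in polar
coordinates the radial integrals are Gamma values, and `Γ(s + 1) = s Γ(s)` gives the second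
moment `∫ ‖v‖² exp (-b ‖v‖²) = n / (2b) · (π / b) ^ (n / 2)` in dimension `n`. With `b = 1/4`
the constants collapse to `d · 2 ^ (d / 2) · exp (-R² / 4)`.
-/

open MeasureTheory Real Set

theorem integral_Ioi_pow_add_two_mul_exp_neg_mul_sq {b : ℝ} (hb : 0 < b) (k : ℕ) :
    ∫ y in Ioi (0 : ℝ), y ^ (k + 2) * exp (-b * y ^ 2) =
      (k + 1) / (2 * b) * ∫ y in Ioi (0 : ℝ), y ^ k * exp (-b * y ^ 2) := by
  have gamma_form (m : ℕ) : ∫ y in Ioi (0 : ℝ), y ^ m * exp (-b * y ^ 2) =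
      b ^ (-((m : ℝ) + 1) / 2) * (1 / 2) * Gamma (((m : ℝ) + 1) / 2) := by
    have hm : -1 < (m : ℝ) := by linarith [m.cast_nonneg (α := ℝ)]
    simpa only [rpow_two, rpow_natCast] using integral_rpow_mul_exp_neg_mul_rpow two_pos hm hb
  have hpow : b ^ (-((k : ℝ) + 2 + 1) / 2) = b ^ (-((k : ℝ) + 1) / 2) * b⁻¹ := by
    rw [← rpow_neg_one, ← rpow_add hb]
    ring_nf
  have hGamma : Gamma (((k : ℝ) + 2 + 1) / 2) = ((k : ℝ) + 1) / 2 * Gamma (((k : ℝ) + 1) / 2) := by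
    rw [← Gamma_add_one (by positivity)]
    ring_nf
  rw [gamma_form, gamma_form]
  push_cast
  rw [hpow, hGamma]
  field_simp

section InnerProductSpace

variable {V : Type*} [NormedAddCommGroup V] [InnerProductSpace ℝ V] [FiniteDimensional ℝ V]
  [MeasurableSpace V] [BorelSpace V]

theorem integrable_norm_sq_mul_exp_neg_mul_sq_norm {b : ℝ} (hb : 0 < b) :
    Integrable (fun v : V => ‖v‖ ^ 2 * exp (-b * ‖v‖ ^ 2)) := by
  rcases subsingleton_or_nontrivial V with hV | hV
  · simp [Subsingleton.elim _ (0 : V)]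
  obtain ⟨m, hm⟩ := Nat.exists_eq_succ_of_ne_zero (Module.finrank_pos (R := ℝ) (M := V)).ne'
  refine (integrable_fun_norm_addHaar volume (f := fun y => y ^ 2 * exp (-b * y ^ 2))).2 ?_
  convert integrableOn_rpow_mul_exp_neg_mul_sq hb (s := ((m + 2 : ℕ) : ℝ))
    (by have := m.cast_nonneg (α := ℝ); push_cast; linarith) using 2 with y
  rw [hm, Nat.succ_sub_one, rpow_natCast, smul_eq_mul]
  ring

theorem integral_norm_sq_mul_exp_neg_mul_sq_norm {b : ℝ} (hb : 0 < b) :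
    ∫ v : V, ‖v‖ ^ 2 * exp (-b * ‖v‖ ^ 2) =
      Module.finrank ℝ V / (2 * b) * (π / b) ^ (Module.finrank ℝ V / 2 : ℝ) := by
  rcases subsingleton_or_nontrivial V with hV | hV
  · simp [Subsingleton.elim _ (0 : V), Module.finrank_zero_of_subsingleton]
  obtain ⟨m, hm⟩ := Nat.exists_eq_succ_of_ne_zero (Module.finrank_pos (R := ℝ) (M := V)).ne'
  rw [← GaussianFourier.integral_rexp_neg_mul_sq_norm hb,
    integral_fun_norm_addHaar volume (fun y => y ^ 2 * exp (-b * y ^ 2)),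
    integral_fun_norm_addHaar volume (fun y => exp (-b * y ^ 2)), hm]
  simp only [smul_eq_mul, ← mul_assoc, ← pow_add]
  rw [integral_Ioi_pow_add_two_mul_exp_neg_mul_sq hb]
  push_cast
  ring

end InnerProductSpace

theorem exp_neg_sq_div_two_mul_le {R r : ℝ} (hR : 0 ≤ R) (hRr : R ≤ r) :
    exp (-r ^ 2 / 2) * (r ^ 2 / 2) ≤ exp (-R ^ 2 / 4) / 2 * (r ^ 2 * exp (-(1 / 4) * r ^ 2)) := by
  have hsplit : exp (-r ^ 2 / 2) ≤ exp (-R ^ 2 / 4) * exp (-(1 / 4) * r ^ 2) := by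
    rw [← exp_add, exp_le_exp]
    nlinarith
  calc _ ≤ exp (-R ^ 2 / 4) * exp (-(1 / 4) * r ^ 2) * (r ^ 2 / 2) := by gcongr
    _ = _ := by ring

/-- Weighted Gaussian tail bound:
`∫_{‖x−a₁‖ > R} (2π)^{−d/2} exp(−‖x−a₁‖²/2)·(‖x−a₁‖²/2) dx ≤ d·exp((d/2)·log 2 − R²/4)`. -/
theorem gaussian_weighted_tail_bound {d : ℕ} (a₁ : EuclideanSpace ℝ (Fin d)) (R : ℝ)
    (hR : 0 < R) :
    ∫ x in {x : EuclideanSpace ℝ (Fin d) | R < ‖x - a₁‖},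
        (2 * Real.pi) ^ (-(d : ℝ) / 2) * Real.exp (-‖x - a₁‖ ^ 2 / 2) * (‖x - a₁‖ ^ 2 / 2) ≤
      (d : ℝ) * Real.exp ((d : ℝ) / 2 * Real.log 2 - R ^ 2 / 4) := by
  have hc : (2 * π) ^ (-(d : ℝ) / 2) * (4 * π) ^ ((d : ℝ) / 2) = exp ((d : ℝ) / 2 * log 2) := by
    rw [neg_div, rpow_neg (by positivity), inv_mul_eq_div, ← div_rpow (by positivity)
      (by positivity), show 4 * π / (2 * π) = 2 by field_simp; norm_num, rpow_def_of_pos two_pos,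
      mul_comm]
  set c := (2 * π) ^ (-(d : ℝ) / 2)
  set g : EuclideanSpace ℝ (Fin d) → ℝ := fun y => ‖y‖ ^ 2 * exp (-(1 / 4) * ‖y‖ ^ 2)
  have hg : Integrable (fun x => c * (exp (-R ^ 2 / 4) / 2 * g (x - a₁))) :=
    ((integrable_norm_sq_mul_exp_neg_mul_sq_norm (by norm_num)).comp_sub_right a₁).const_mul _
      |>.const_mul _
  have hS : MeasurableSet {x : EuclideanSpace ℝ (Fin d) | R < ‖x - a₁‖} :=
    measurableSet_lt measurable_const (by fun_prop)
  calc _ ≤ ∫ x in {x : EuclideanSpace ℝ (Fin d) | R < ‖x - a₁‖},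
        c * (exp (-R ^ 2 / 4) / 2 * g (x - a₁)) := by
        refine integral_mono_of_nonneg (ae_of_all _ fun x => by positivity) hg.integrableOn
          (ae_restrict_of_forall_mem hS fun x hx => ?_)
        simp only [mul_assoc]
        exact mul_le_mul_of_nonneg_left (exp_neg_sq_div_two_mul_le hR.le hx.le)
          (by positivity)
    _ ≤ ∫ x, c * (exp (-R ^ 2 / 4) / 2 * g (x - a₁)) :=
        setIntegral_le_integral hg (ae_of_all _ fun x => by positivity)
    _ = c * (exp (-R ^ 2 / 4) / 2 * (d / (2 * (1 / 4)) * (π / (1 / 4)) ^ ((d : ℝ) / 2))) := by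
        rw [integral_const_mul, integral_const_mul, integral_sub_right_eq_self g a₁,
          integral_norm_sq_mul_exp_neg_mul_sq_norm (by norm_num), finrank_euclideanSpace_fin]
    _ = _ := by
        rw [show π / (1 / 4) = 4 * π by ring, sub_eq_add_neg, exp_add, ← hc, neg_div]
        ring
end

section
/- Let π = w₁·N(a₁, I_d) + w₂·N(a₂, I_d) and π̃ = w̃₁·N(a₁, I_d) + w̃₂·N(a₂, I_d) with positive weights summing to 1, and let p be any probability density. Define Ω₁ = {x : ‖x−a₁‖ ≤ ‖a₁−a₂‖/4}, Ω₂ = {x : ‖x−a₂‖ ≤ ‖a₁−a₂‖/4}, Ω₃ = Ω₁ᶜ ∩ Ω₂ᶜ. Then ∫ ‖∇log π(x) − ∇log π̃(x)‖² p(x) dx ≤ 2·exp(−‖a₁−a₂‖²/2)·(w₂²/w₁² + w̃₂²/w̃₁² + w₁²/w₂² + w̃₁²/w̃₂²)·‖a₁−a₂‖² + 8·(‖a₁‖² + ‖a₂‖²)·∫_{Ω₃} p(x) dx. -/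
/-!
Write `λ(x) = mogResp w₁ w₂ a₁ a₂ x = w₁γ_{a₁}(x) / (w₁γ_{a₁}(x) + w₂γ_{a₂}(x))` for the posterior
probability of the first component. Then `∇log π(x) = λ(x) a₁ + (1 − λ(x)) a₂ − x`, so the score error at `x` is
`(λ(x) − λ̃(x))² ‖a₁ − a₂‖²`. Everywhere this is at most `‖a₁ − a₂‖²`. On the ball `Ω₂` around `a₂`
the Gaussian ratio gives `γ_{a₁} ≤ exp(−‖a₁ − a₂‖²/4) γ_{a₂}`, so `λ, λ̃` are exponentially small
there, and symmetrically for `1 − λ, 1 − λ̃` on `Ω₁`. Integrating against `p` gives the bound.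
-/

open MeasureTheory

/-- The unnormalized Gaussian kernel `γ_a(x) = exp(−‖x − a‖²/2)`. -/
noncomputable def gam {d : ℕ} (a x : EuclideanSpace ℝ (Fin d)) : ℝ :=
  Real.exp (-‖x - a‖ ^ 2 / 2)

/-- The score `∇ log π` of the mixture `π = w₁ N(a₁, I) + w₂ N(a₂, I)`. -/
noncomputable def mogScore {d : ℕ} (w₁ w₂ : ℝ) (a₁ a₂ x : EuclideanSpace ℝ (Fin d)) :
    EuclideanSpace ℝ (Fin d) :=
  (1 / (w₁ * gam a₁ x + w₂ * gam a₂ x)) •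
    ((w₁ * gam a₁ x) • a₁ + (w₂ * gam a₂ x) • a₂) - x

section Integral

variable {α : Type*} [MeasurableSpace α] {μ : Measure α}

theorem integral_mul_le_add_mul_setIntegral {f p : α → ℝ} {s : Set α} {A B : ℝ}
    (hs : MeasurableSet s) (hf : AEStronglyMeasurable f μ) (hp0 : ∀ x, 0 ≤ p x)
    (hp : Integrable p μ) (hf0 : ∀ x, 0 ≤ f x) (hfs : ∀ x ∈ s, f x ≤ A + B)
    (hfsc : ∀ x ∉ s, f x ≤ A) :
    ∫ x, f x * p x ∂μ ≤ A * ∫ x, p x ∂μ + B * ∫ x in s, p x ∂μ := by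
  have hf_bdd : ∀ x, ‖f x‖ ≤ |A| + |B| := fun x => by
    rw [Real.norm_of_nonneg (hf0 x)]
    by_cases hx : x ∈ s
    · linarith [hfs x hx, le_abs_self A, le_abs_self B]
    · linarith [hfsc x hx, le_abs_self A, abs_nonneg B]
  have hpt : ∀ x, f x * p x ≤ A * p x + B * s.indicator p x := fun x => by
    by_cases hx : x ∈ s
    · rw [Set.indicator_of_mem hx, ← add_mul]
      exact mul_le_mul_of_nonneg_right (hfs x hx) (hp0 x)
    · rw [Set.indicator_of_notMem hx, mul_zero, add_zero]
      exact mul_le_mul_of_nonneg_right (hfsc x hx) (hp0 x)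
  have hfp : Integrable (fun x => f x * p x) μ :=
    hp.bdd_mul hf (Filter.Eventually.of_forall hf_bdd)
  have hbound : Integrable (fun x => A * p x + B * s.indicator p x) μ :=
    (hp.const_mul A).add ((hp.indicator hs).const_mul B)
  calc ∫ x, f x * p x ∂μ ≤ ∫ x, (A * p x + B * s.indicator p x) ∂μ :=
        integral_mono hfp hbound hpt
    _ = A * ∫ x, p x ∂μ + B * ∫ x in s, p x ∂μ := by
      rw [integral_add (hp.const_mul A) ((hp.indicator hs).const_mul B), integral_const_mul,
        integral_const_mul, integral_indicator hs]

end Integral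

section Mixture

variable {d : ℕ} {w₁ w₂ v₁ v₂ : ℝ} {a₁ a₂ x : EuclideanSpace ℝ (Fin d)}

noncomputable def mogResp (w₁ w₂ : ℝ) (a₁ a₂ x : EuclideanSpace ℝ (Fin d)) : ℝ :=
  w₁ * gam a₁ x / (w₁ * gam a₁ x + w₂ * gam a₂ x)

theorem gam_pos (a x : EuclideanSpace ℝ (Fin d)) : 0 < gam a x := Real.exp_pos _

theorem mogResp_nonneg (hw₁ : 0 ≤ w₁) (hw₂ : 0 ≤ w₂) : 0 ≤ mogResp w₁ w₂ a₁ a₂ x := by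
  have := gam_pos a₁ x
  have := gam_pos a₂ x
  unfold mogResp
  positivity

theorem mogResp_le_one (hw₁ : 0 ≤ w₁) (hw₂ : 0 ≤ w₂) : mogResp w₁ w₂ a₁ a₂ x ≤ 1 :=
  div_le_one_of_le₀ (le_add_of_nonneg_right (mul_nonneg hw₂ (gam_pos a₂ x).le))
    (add_nonneg (mul_nonneg hw₁ (gam_pos a₁ x).le) (mul_nonneg hw₂ (gam_pos a₂ x).le))

theorem mogResp_add_mogResp_swap (hw₁ : 0 < w₁) (hw₂ : 0 < w₂) :
    mogResp w₁ w₂ a₁ a₂ x + mogResp w₂ w₁ a₂ a₁ x = 1 := by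
  have := gam_pos a₁ x
  have := gam_pos a₂ x
  unfold mogResp
  rw [add_comm (w₂ * gam a₂ x), ← add_div, div_self (by positivity)]

theorem mogScore_eq_mogResp :
    mogScore w₁ w₂ a₁ a₂ x = mogResp w₁ w₂ a₁ a₂ x • a₁ + mogResp w₂ w₁ a₂ a₁ x • a₂ - x := by
  unfold mogScore mogResp
  rw [smul_add, smul_smul, smul_smul, one_div_mul_eq_div, one_div_mul_eq_div,
    add_comm (w₂ * gam a₂ x) (w₁ * gam a₁ x)]

theorem mogScore_swap : mogScore w₁ w₂ a₁ a₂ x = mogScore w₂ w₁ a₂ a₁ x := by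
  unfold mogScore
  rw [add_comm (w₁ * gam a₁ x), add_comm ((w₁ * gam a₁ x) • a₁)]

theorem mogScore_sub_mogScore (hw₁ : 0 < w₁) (hw₂ : 0 < w₂) (hv₁ : 0 < v₁) (hv₂ : 0 < v₂) :
    mogScore w₁ w₂ a₁ a₂ x - mogScore v₁ v₂ a₁ a₂ x =
      (mogResp w₁ w₂ a₁ a₂ x - mogResp v₁ v₂ a₁ a₂ x) • (a₁ - a₂) := by
  rw [mogScore_eq_mogResp, mogScore_eq_mogResp,
    ← sub_eq_of_eq_add' (mogResp_add_mogResp_swap hw₁ hw₂).symm,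
    ← sub_eq_of_eq_add' (mogResp_add_mogResp_swap hv₁ hv₂).symm]
  module

theorem gam_le_exp_mul_gam (hx : ‖x - a₂‖ ≤ ‖a₁ - a₂‖ / 4) :
    gam a₁ x ≤ Real.exp (-‖a₁ - a₂‖ ^ 2 / 4) * gam a₂ x := by
  have htri : ‖a₁ - a₂‖ ≤ ‖x - a₁‖ + ‖x - a₂‖ := by
    simpa only [norm_sub_rev x a₁] using norm_sub_le_norm_sub_add_norm_sub a₁ x a₂
  unfold gam
  rw [← Real.exp_add, Real.exp_le_exp]
  nlinarith [norm_nonneg (x - a₁), norm_nonneg (x - a₂)]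

theorem mogResp_le_of_norm_sub_le (hw₁ : 0 ≤ w₁) (hw₂ : 0 < w₂)
    (hx : ‖x - a₂‖ ≤ ‖a₁ - a₂‖ / 4) :
    mogResp w₁ w₂ a₁ a₂ x ≤ w₁ / w₂ * Real.exp (-‖a₁ - a₂‖ ^ 2 / 4) := by
  have hg₁ := gam_pos a₁ x
  have hg₂ := gam_pos a₂ x
  calc mogResp w₁ w₂ a₁ a₂ x ≤ w₁ * gam a₁ x / (w₂ * gam a₂ x) :=
        div_le_div_of_nonneg_left (by positivity) (by positivity) (by nlinarith)
    _ ≤ w₁ * (Real.exp (-‖a₁ - a₂‖ ^ 2 / 4) * gam a₂ x) / (w₂ * gam a₂ x) := by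
        gcongr
        exact gam_le_exp_mul_gam hx
    _ = w₁ / w₂ * Real.exp (-‖a₁ - a₂‖ ^ 2 / 4) := by
        field_simp

theorem norm_mogScore_sub_sq_le (hw₁ : 0 < w₁) (hw₂ : 0 < w₂) (hv₁ : 0 < v₁) (hv₂ : 0 < v₂) :
    ‖mogScore w₁ w₂ a₁ a₂ x - mogScore v₁ v₂ a₁ a₂ x‖ ^ 2 ≤ ‖a₁ - a₂‖ ^ 2 := by
  rw [mogScore_sub_mogScore hw₁ hw₂ hv₁ hv₂, norm_smul, mul_pow, Real.norm_eq_abs, sq_abs]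
  have hresp : (mogResp w₁ w₂ a₁ a₂ x - mogResp v₁ v₂ a₁ a₂ x) ^ 2 ≤ 1 :=
    (sq_le_one_iff_abs_le_one _).2 <| abs_sub_le_of_nonneg_of_le
      (mogResp_nonneg hw₁.le hw₂.le) (mogResp_le_one hw₁.le hw₂.le)
      (mogResp_nonneg hv₁.le hv₂.le) (mogResp_le_one hv₁.le hv₂.le)
  simpa using mul_le_mul_of_nonneg_right hresp (sq_nonneg ‖a₁ - a₂‖)

theorem norm_mogScore_sub_sq_le_of_norm_sub_le
    (hw₁ : 0 < w₁) (hw₂ : 0 < w₂) (hv₁ : 0 < v₁) (hv₂ : 0 < v₂)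
    (hx : ‖x - a₂‖ ≤ ‖a₁ - a₂‖ / 4) :
    ‖mogScore w₁ w₂ a₁ a₂ x - mogScore v₁ v₂ a₁ a₂ x‖ ^ 2 ≤
      2 * Real.exp (-‖a₁ - a₂‖ ^ 2 / 2) * (w₁ ^ 2 / w₂ ^ 2 + v₁ ^ 2 / v₂ ^ 2) *
        ‖a₁ - a₂‖ ^ 2 := by
  rw [mogScore_sub_mogScore hw₁ hw₂ hv₁ hv₂, norm_smul, mul_pow, Real.norm_eq_abs, sq_abs]
  set E := Real.exp (-‖a₁ - a₂‖ ^ 2 / 4)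
  have hE : Real.exp (-‖a₁ - a₂‖ ^ 2 / 2) = E ^ 2 := by
    rw [← Real.exp_nat_mul]
    ring_nf
  have hsq : ∀ {u₁ u₂ : ℝ}, 0 < u₁ → 0 < u₂ →
      mogResp u₁ u₂ a₁ a₂ x ^ 2 ≤ u₁ ^ 2 / u₂ ^ 2 * E ^ 2 := fun hu₁ hu₂ => by
    rw [← div_pow, ← mul_pow]
    exact pow_le_pow_left₀ (mogResp_nonneg hu₁.le hu₂.le)
      (mogResp_le_of_norm_sub_le hu₁.le hu₂ hx) 2
  have hw := hsq hw₁ hw₂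
  have hv := hsq hv₁ hv₂
  have hdiff : (mogResp w₁ w₂ a₁ a₂ x - mogResp v₁ v₂ a₁ a₂ x) ^ 2 ≤
      2 * (mogResp w₁ w₂ a₁ a₂ x ^ 2 + mogResp v₁ v₂ a₁ a₂ x ^ 2) := by
    simpa only [sub_eq_add_neg, neg_sq] using
      add_sq_le (a := mogResp w₁ w₂ a₁ a₂ x) (b := -mogResp v₁ v₂ a₁ a₂ x)
  rw [hE]
  gcongr
  linarith

theorem norm_mogScore_sub_sq_le_of_near
    (hw₁ : 0 < w₁) (hw₂ : 0 < w₂) (hv₁ : 0 < v₁) (hv₂ : 0 < v₂)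
    (hx : ‖x - a₁‖ ≤ ‖a₁ - a₂‖ / 4 ∨ ‖x - a₂‖ ≤ ‖a₁ - a₂‖ / 4) :
    ‖mogScore w₁ w₂ a₁ a₂ x - mogScore v₁ v₂ a₁ a₂ x‖ ^ 2 ≤
      2 * Real.exp (-‖a₁ - a₂‖ ^ 2 / 2) *
        (w₂ ^ 2 / w₁ ^ 2 + v₂ ^ 2 / v₁ ^ 2 + w₁ ^ 2 / w₂ ^ 2 + v₁ ^ 2 / v₂ ^ 2) *
        ‖a₁ - a₂‖ ^ 2 := by
  rcases hx with hx | hx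
  · rw [norm_sub_rev a₁ a₂] at hx ⊢
    rw [mogScore_swap, mogScore_swap (w₁ := v₁)]
    refine (norm_mogScore_sub_sq_le_of_norm_sub_le hw₂ hw₁ hv₂ hv₁ hx).trans ?_
    gcongr 2 * _ * ?_ * _
    linarith [div_nonneg (sq_nonneg w₁) (sq_nonneg w₂), div_nonneg (sq_nonneg v₁) (sq_nonneg v₂)]
  · refine (norm_mogScore_sub_sq_le_of_norm_sub_le hw₁ hw₂ hv₁ hv₂ hx).trans ?_
    gcongr 2 * _ * ?_ * _
    linarith [div_nonneg (sq_nonneg w₂) (sq_nonneg w₁), div_nonneg (sq_nonneg v₂) (sq_nonneg v₁)]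

theorem measurable_mogScore (w₁ w₂ : ℝ) (a₁ a₂ : EuclideanSpace ℝ (Fin d)) :
    Measurable (mogScore w₁ w₂ a₁ a₂) := by
  unfold mogScore gam
  fun_prop

end Mixture

theorem score_error_upper_bound_mog_general {d : ℕ} (a₁ a₂ : EuclideanSpace ℝ (Fin d))
    (w₁ w₂ tw₁ tw₂ : ℝ) (hw₁ : 0 < w₁) (hw₂ : 0 < w₂) (htw₁ : 0 < tw₁) (htw₂ : 0 < tw₂)
    (p : EuclideanSpace ℝ (Fin d) → ℝ) (hp0 : ∀ x, 0 ≤ p x)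
    (hpint : Integrable p) (hp1 : ∫ x, p x = 1) :
    ∫ x, ‖mogScore w₁ w₂ a₁ a₂ x - mogScore tw₁ tw₂ a₁ a₂ x‖ ^ 2 * p x ≤
      2 * Real.exp (-‖a₁ - a₂‖ ^ 2 / 2) *
        (w₂ ^ 2 / w₁ ^ 2 + tw₂ ^ 2 / tw₁ ^ 2 + w₁ ^ 2 / w₂ ^ 2 + tw₁ ^ 2 / tw₂ ^ 2) *
        ‖a₁ - a₂‖ ^ 2 +
      8 * (‖a₁‖ ^ 2 + ‖a₂‖ ^ 2) *
        ∫ x in {x : EuclideanSpace ℝ (Fin d) |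
            ‖a₁ - a₂‖ / 4 < ‖x - a₁‖ ∧ ‖a₁ - a₂‖ / 4 < ‖x - a₂‖}, p x := by
  set s := {x : EuclideanSpace ℝ (Fin d) |
    ‖a₁ - a₂‖ / 4 < ‖x - a₁‖ ∧ ‖a₁ - a₂‖ / 4 < ‖x - a₂‖}
  have hs : MeasurableSet s :=
    (measurableSet_lt measurable_const (measurable_id.sub_const a₁).norm).inter
      (measurableSet_lt measurable_const (measurable_id.sub_const a₂).norm)
  have hf : Measurable fun x => ‖mogScore w₁ w₂ a₁ a₂ x - mogScore tw₁ tw₂ a₁ a₂ x‖ ^ 2 :=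
    ((measurable_mogScore w₁ w₂ a₁ a₂).sub (measurable_mogScore tw₁ tw₂ a₁ a₂)).norm.pow_const 2
  have hfar : ∀ x, ‖mogScore w₁ w₂ a₁ a₂ x - mogScore tw₁ tw₂ a₁ a₂ x‖ ^ 2 ≤
      8 * (‖a₁‖ ^ 2 + ‖a₂‖ ^ 2) := fun x => by
    have hr : ‖a₁ - a₂‖ ^ 2 ≤ (‖a₁‖ + ‖a₂‖) ^ 2 := by gcongr; exact norm_sub_le a₁ a₂
    linarith [norm_mogScore_sub_sq_le (a₁ := a₁) (a₂ := a₂) (x := x) hw₁ hw₂ htw₁ htw₂,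
      add_sq_le (a := ‖a₁‖) (b := ‖a₂‖), add_nonneg (sq_nonneg ‖a₁‖) (sq_nonneg ‖a₂‖)]
  have hint := integral_mul_le_add_mul_setIntegral hs hf.aestronglyMeasurable hp0 hpint
    (fun x => by positivity) (fun x _ => (hfar x).trans (le_add_of_nonneg_left ?_))
    fun x hx => norm_mogScore_sub_sq_le_of_near hw₁ hw₂ htw₁ htw₂ <| by
      simpa only [s, Set.mem_ofPred_eq, not_and_or, not_lt] using hx
  · rwa [hp1, mul_one] at hint
  · positivity

/-- Upper bound on the `L²(p)` score error between two Gaussian mixtures with the same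
components but different weights. -/
theorem score_error_upper_bound_mog {d : ℕ} (a₁ a₂ : EuclideanSpace ℝ (Fin d))
    (w₁ w₂ tw₁ tw₂ : ℝ) (hw₁ : 0 < w₁) (hw₂ : 0 < w₂) (htw₁ : 0 < tw₁) (htw₂ : 0 < tw₂)
    (hsum : w₁ + w₂ = 1) (htsum : tw₁ + tw₂ = 1)
    (p : EuclideanSpace ℝ (Fin d) → ℝ) (hp0 : ∀ x, 0 ≤ p x)
    (hpint : Integrable p) (hp1 : ∫ x, p x = 1) :
    ∫ x, ‖mogScore w₁ w₂ a₁ a₂ x - mogScore tw₁ tw₂ a₁ a₂ x‖ ^ 2 * p x ≤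
      2 * Real.exp (-‖a₁ - a₂‖ ^ 2 / 2) *
        (w₂ ^ 2 / w₁ ^ 2 + tw₂ ^ 2 / tw₁ ^ 2 + w₁ ^ 2 / w₂ ^ 2 + tw₁ ^ 2 / tw₂ ^ 2) *
        ‖a₁ - a₂‖ ^ 2 +
      8 * (‖a₁‖ ^ 2 + ‖a₂‖ ^ 2) *
        ∫ x in {x : EuclideanSpace ℝ (Fin d) |
            ‖a₁ - a₂‖ / 4 < ‖x - a₁‖ ∧ ‖a₁ - a₂‖ / 4 < ‖x - a₂‖}, p x :=
  score_error_upper_bound_mog_general a₁ a₂ w₁ w₂ tw₁ tw₂ hw₁ hw₂ htw₁ htw₂ p hp0 hpint hp1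
end
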